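/- Fix b > 0, ρ > 0 and v_c ≥ 0. For each integer n ≥ 3 let Z_n be a beta random variable with parameters 2b and (n−2)b. Then the shifted rescaled Voronoi lengths V_n = v_c + ((n−2)b/(2ρ)) Z_n converge in distribution, as n → ∞, to v_c + Y where Y is a gamma random variable with shape parameter 2b and rate 2ρ; the limiting density is the translated gamma density p(v) = (2ρ)^{2b}(v − v_c)^{2b−1} e^{−2ρ(v − v_c)} / Γ(2b) for v ≥ v_c, which equals the k-gamma distribution with k = 2b upon substituting 2ρ = k/(v̄ − v_c) with v̄ the mean of the limit. -/

import Mathlib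

open MeasureTheory ProbabilityTheory Filter

/-- The Beta function `B(a, b) = Γ(a) Γ(b) / Γ(a + b)`. -/
noncomputable def betaFun (a b : ℝ) : ℝ :=
  Real.Gamma a * Real.Gamma b / Real.Gamma (a + b)

/-- The probability density function of the beta distribution with parameters `a, b`,
supported on `[0, 1]`. -/
noncomputable def betaPDFReal (a b x : ℝ) : ℝ :=
  if 0 ≤ x ∧ x ≤ 1 then x ^ (a - 1) * (1 - x) ^ (b - 1) / betaFun a b else 0

/-- The beta distribution (measure) with parameters `a, b`. -/
noncomputable def betaMeasure (a b : ℝ) : Measure ℝ :=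
  volume.withDensity (fun x => ENNReal.ofReal (_root_.betaPDFReal a b x))

/-! For `Z ~ Beta(a, β)` the variable `(β / r) Z` has density
`Γ(β + a) / (Γ(β) β^a) · r^a y^(a-1) (1 - r y / β)^(β-1) / Γ(a)` on `[0, β / r]`.
As `β → ∞` the Gamma ratio tends to `1` (Wendel's limit, a consequence of the log-convexity of `Γ`)
and `(1 - r y / β)^(β-1) → e^(-r y)`, so this density converges pointwise to the gamma density.
On `(0, s]` it is dominated by a multiple of `y^(a-1)`, and dominated convergence gives the
convergence of the distribution functions; the offset `v_c` is a mere translation. -/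

open Set Topology

namespace Real

lemma mul_log_sub_one_le_log_Gamma_add_sub {a β : ℝ} (ha : 0 < a) (hβ : 1 < β) :
    a * log (β - 1) ≤ log (Gamma (β + a)) - log (Gamma β) := by
  have h := convexOn_log_Gamma.slope_mono_adjacent (x := β - 1) (y := β) (z := β + a)
    (mem_Ioi.2 (by linarith)) (mem_Ioi.2 (by linarith)) (by linarith) (by linarith)
  have hΓ : log (Gamma β) = log (Gamma (β - 1)) + log (β - 1) := by
    rw [← log_mul (Gamma_pos_of_pos (by linarith)).ne' (by linarith), mul_comm,
      ← Gamma_add_one (by linarith), sub_add_cancel]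
  simp only [Function.comp_apply, hΓ, sub_sub_cancel, div_one, add_sub_cancel_left] at h
  rw [le_div_iff₀ ha] at h
  linarith

lemma log_Gamma_add_sub_le_mul_log_add {a β : ℝ} (ha : 0 < a) (hβ : 0 < β) :
    log (Gamma (β + a)) - log (Gamma β) ≤ a * log (β + a) := by
  have h := convexOn_log_Gamma.slope_mono_adjacent (x := β) (y := β + a) (z := β + a + 1)
    (mem_Ioi.2 hβ) (mem_Ioi.2 (by linarith)) (by linarith) (by linarith)
  have hΓ : log (Gamma (β + a + 1)) = log (Gamma (β + a)) + log (β + a) := by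
    rw [Gamma_add_one (by linarith), log_mul (by linarith) (Gamma_pos_of_pos (by linarith)).ne',
      add_comm]
  simp only [Function.comp_apply, hΓ, add_sub_cancel_left, div_one] at h
  rw [div_le_iff₀ ha] at h
  linarith

theorem tendsto_Gamma_add_div_Gamma_mul_rpow {a : ℝ} (ha : 0 < a) :
    Tendsto (fun β => Gamma (β + a) / (Gamma β * β ^ a)) atTop (𝓝 1) := by
  have hlog : Tendsto (fun β => log (Gamma (β + a)) - log (Gamma β) - a * log β) atTop (𝓝 0) := by
    have hlow := (tendsto_log_comp_add_sub_log (-1)).const_mul a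
    have hup := (tendsto_log_comp_add_sub_log a).const_mul a
    rw [mul_zero] at hlow hup
    refine tendsto_of_tendsto_of_tendsto_of_le_of_le' hlow hup ?_ ?_
    · filter_upwards [eventually_gt_atTop 1] with β hβ
      have := mul_log_sub_one_le_log_Gamma_add_sub ha hβ
      rw [← sub_eq_add_neg]
      linarith
    · filter_upwards [eventually_gt_atTop 0] with β hβ
      have := log_Gamma_add_sub_le_mul_log_add ha hβ
      linarith
  refine (exp_zero ▸ hlog.rexp).congr' ?_
  filter_upwards [eventually_gt_atTop 0] with β hβ
  have hΓ := Gamma_pos_of_pos hβ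
  have hΓa := Gamma_pos_of_pos (add_pos hβ ha)
  have hpow := rpow_pos_of_pos hβ a
  rw [← log_rpow hβ, sub_sub, ← log_mul hΓ.ne' hpow.ne', ← log_div hΓa.ne' (mul_pos hΓ hpow).ne',
    exp_log (div_pos hΓa (mul_pos hΓ hpow))]

end Real

lemma tendsto_one_sub_div_rpow_sub_one (t : ℝ) :
    Tendsto (fun β : ℝ => (1 - t / β) ^ (β - 1)) atTop (𝓝 (Real.exp (-t))) := by
  have hbase : Tendsto (fun β : ℝ => 1 - t / β) atTop (𝓝 1) := by
    simpa using tendsto_const_nhds.sub ((tendsto_const_nhds (x := t)).div_atTop tendsto_id)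
  have h := (Real.tendsto_one_add_div_rpow_exp (-t)).div hbase one_ne_zero
  rw [div_one] at h
  refine h.congr' ?_
  filter_upwards [hbase.eventually (lt_mem_nhds zero_lt_one)] with β hβ
  rw [Real.rpow_sub hβ, Real.rpow_one, Pi.div_apply, neg_div, ← sub_eq_add_neg]

section BetaDensity

variable {a r β : ℝ}

lemma betaPDFReal_nonneg (ha : 0 < a) (hβ : 0 < β) (x : ℝ) : 0 ≤ _root_.betaPDFReal a β x := by
  unfold _root_.betaPDFReal betaFun
  split_ifs with hx
  · have := Real.Gamma_pos_of_pos ha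
    have := Real.Gamma_pos_of_pos hβ
    have := Real.Gamma_pos_of_pos (add_pos ha hβ)
    have := Real.rpow_nonneg hx.1 (a - 1)
    have := Real.rpow_nonneg (sub_nonneg.2 hx.2) (β - 1)
    positivity
  · exact le_rfl

lemma betaPDFReal_of_neg {x : ℝ} (hx : x < 0) : _root_.betaPDFReal a β x = 0 :=
  if_neg fun h => hx.not_ge h.1

@[fun_prop]
lemma measurable_betaPDFReal : Measurable (_root_.betaPDFReal a β) :=
  Measurable.ite measurableSet_Icc (by fun_prop) (by fun_prop)

lemma div_mul_betaPDFReal_div_mul (ha : 0 < a) (hr : 0 < r) (hβ : 0 < β) {y : ℝ} (hy : 0 ≤ y)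
    (hyβ : r / β * y ≤ 1) :
    r / β * _root_.betaPDFReal a β (r / β * y) =
      Real.Gamma (β + a) / (Real.Gamma β * β ^ a) *
        (r ^ a * y ^ (a - 1) * (1 - r * y / β) ^ (β - 1) / Real.Gamma a) := by
  have hrβ : 0 < r / β := div_pos hr hβ
  rw [_root_.betaPDFReal, if_pos ⟨by positivity, hyβ⟩, betaFun, Real.mul_rpow hrβ.le hy,
    Real.div_rpow hr.le hβ.le, add_comm a β, Real.rpow_sub_one hr.ne', Real.rpow_sub_one hβ.ne']
  have := (Real.Gamma_pos_of_pos ha).ne'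
  have := (Real.Gamma_pos_of_pos hβ).ne'
  have := (Real.Gamma_pos_of_pos (add_pos hβ ha)).ne'
  have := (Real.rpow_pos_of_pos hβ a).ne'
  field_simp

lemma div_mul_betaPDFReal_div_mul_le (ha : 0 < a) (hr : 0 < r) (hβ : 1 ≤ β) {y : ℝ}
    (hy : 0 ≤ y) :
    r / β * _root_.betaPDFReal a β (r / β * y) ≤
      Real.Gamma (β + a) / (Real.Gamma β * β ^ a) * (r ^ a * y ^ (a - 1) / Real.Gamma a) := by
  have hβ0 : 0 < β := by linarith
  have hratio : 0 ≤ Real.Gamma (β + a) / (Real.Gamma β * β ^ a) :=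
    div_nonneg (Real.Gamma_pos_of_pos (by linarith)).le (by positivity)
  have hdens : 0 ≤ r ^ a * y ^ (a - 1) / Real.Gamma a := by
    have := Real.Gamma_pos_of_pos ha
    positivity
  by_cases hyβ : r / β * y ≤ 1
  · rw [div_mul_betaPDFReal_div_mul ha hr hβ0 hy hyβ, mul_div_right_comm]
    refine mul_le_mul_of_nonneg_left (mul_le_of_le_one_right hdens ?_) hratio
    have : r * y / β ≤ 1 := by rwa [div_mul_eq_mul_div] at hyβ
    exact Real.rpow_le_one (by linarith) (by linarith [div_nonneg (mul_nonneg hr.le hy) hβ0.le])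
      (by linarith)
  · rw [_root_.betaPDFReal, if_neg (fun h => hyβ h.2), mul_zero]
    positivity

lemma tendsto_div_mul_betaPDFReal_div_mul (ha : 0 < a) (hr : 0 < r) {y : ℝ} (hy : 0 ≤ y) :
    Tendsto (fun β => r / β * _root_.betaPDFReal a β (r / β * y)) atTop
      (𝓝 (gammaPDFReal a r y)) := by
  have hlim := (Real.tendsto_Gamma_add_div_Gamma_mul_rpow ha).mul
    (((tendsto_one_sub_div_rpow_sub_one (r * y)).const_mul (r ^ a * y ^ (a - 1))).div_const
      (Real.Gamma a))
  have hγ : gammaPDFReal a r y = r ^ a * y ^ (a - 1) * Real.exp (-(r * y)) / Real.Gamma a := by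
    rw [gammaPDFReal, if_pos hy]
    ring
  rw [one_mul, ← hγ] at hlim
  refine hlim.congr' ?_
  filter_upwards [eventually_gt_atTop 0, eventually_ge_atTop (r * y)] with β hβ hβy
  refine (div_mul_betaPDFReal_div_mul ha hr hβ hy ?_).symm
  rwa [div_mul_eq_mul_div, div_le_one hβ]

theorem tendsto_setIntegral_div_mul_betaPDFReal_div_mul (ha : 0 < a) (hr : 0 < r) (s : ℝ) :
    Tendsto (fun β => ∫ y in Ioc 0 s, r / β * _root_.betaPDFReal a β (r / β * y)) atTop
      (𝓝 (∫ y in Ioc 0 s, gammaPDFReal a r y)) := by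
  set C := r ^ a / Real.Gamma a
  have hratio : ∀ᶠ β in atTop, Real.Gamma (β + a) / (Real.Gamma β * β ^ a) ≤ 2 :=
    (Real.tendsto_Gamma_add_div_Gamma_mul_rpow ha).eventually (eventually_le_nhds one_lt_two)
  refine tendsto_integral_filter_of_dominated_convergence (fun y => 2 * (C * y ^ (a - 1)))
    (Eventually.of_forall fun β => (by fun_prop : Measurable _).aestronglyMeasurable) ?_ ?_ ?_
  · filter_upwards [hratio, eventually_ge_atTop 1] with β hβ2 hβ1
    refine (ae_restrict_iff' measurableSet_Ioc).2 (Eventually.of_forall fun y hy => ?_)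
    have hle := div_mul_betaPDFReal_div_mul_le ha hr hβ1 hy.1.le
    rw [Real.norm_of_nonneg (mul_nonneg (by positivity) (betaPDFReal_nonneg ha (by linarith) _))]
    refine hle.trans (mul_le_mul hβ2 (le_of_eq (by ring)) ?_ zero_le_two)
    have := Real.Gamma_pos_of_pos ha
    have := Real.rpow_nonneg hy.1.le (a - 1)
    positivity
  · exact ((intervalIntegral.intervalIntegrable_rpow' (by linarith : -1 < a - 1)).1.const_mul
      C).const_mul 2
  · exact (ae_restrict_iff' measurableSet_Ioc).2 (Eventually.of_forall fun y hy =>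
      tendsto_div_mul_betaPDFReal_div_mul ha hr hy.1.le)

end BetaDensity

lemma map_const_add_mul_apply_Iic (μ : Measure ℝ) {c : ℝ} (hc : 0 < c) (v x : ℝ) :
    μ.map (fun z => v + c * z) (Iic x) = μ (Iic ((x - v) / c)) := by
  rw [Measure.map_apply (by fun_prop) measurableSet_Iic]
  congr 1
  ext z
  simp only [mem_preimage, mem_Iic, le_div_iff₀ hc]
  constructor <;> intro h <;> linarith

lemma toReal_withDensity_ofReal_Iic {f : ℝ → ℝ} (hf : Measurable f) (hf_nonneg : ∀ y, 0 ≤ f y)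
    (hf_neg : ∀ y < 0, f y = 0) (t : ℝ) :
    ((volume.withDensity fun y => ENNReal.ofReal (f y)) (Iic t)).toReal = ∫ y in Ioc 0 t, f y := by
  rw [withDensity_apply _ measurableSet_Iic, ← integral_eq_lintegral_of_nonneg_ae
    (Eventually.of_forall hf_nonneg) hf.aestronglyMeasurable]
  refine setIntegral_eq_of_subset_of_ae_sdiff_eq_zero measurableSet_Iic.nullMeasurableSet
    Ioc_subset_Iic_self ?_
  filter_upwards [Measure.ae_ne volume 0] with y hy0 hy
  exact hf_neg y (lt_of_le_of_ne (not_lt.1 fun h => hy.2 ⟨h, hy.1⟩) hy0)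

lemma setIntegral_Ioc_zero_mul (g : ℝ → ℝ) {c : ℝ} (hc : 0 < c) (s : ℝ) :
    ∫ z in Ioc 0 (c * s), g z = ∫ y in Ioc 0 s, c * g (c * y) := by
  rcases le_or_gt s 0 with hs | hs
  · rw [Ioc_eq_empty (by nlinarith), Ioc_eq_empty (by linarith)]
    simp only [Measure.restrict_empty, integral_zero_measure]
  · rw [← intervalIntegral.integral_of_le (by positivity), ← intervalIntegral.integral_of_le hs.le,
      intervalIntegral.integral_const_mul, intervalIntegral.mul_integral_comp_mul_left, mul_zero]

lemma toReal_map_betaMeasure_Iic {a r β : ℝ} (ha : 0 < a) (hr : 0 < r) (hβ : 0 < β) (v x : ℝ) :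
    (((_root_.betaMeasure a β).map (fun z => v + β / r * z)) (Iic x)).toReal =
      ∫ y in Ioc 0 (x - v), r / β * _root_.betaPDFReal a β (r / β * y) := by
  rw [map_const_add_mul_apply_Iic _ (div_pos hβ hr), div_div_eq_mul_div, mul_div_assoc, mul_comm,
    _root_.betaMeasure, toReal_withDensity_ofReal_Iic measurable_betaPDFReal
      (betaPDFReal_nonneg ha hβ) (fun _ => betaPDFReal_of_neg), setIntegral_Ioc_zero_mul _ (div_pos hr hβ)]

lemma toReal_map_gammaMeasure_Iic {a r : ℝ} (ha : 0 < a) (hr : 0 < r) (v x : ℝ) :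
    (((gammaMeasure a r).map (fun y => v + y)) (Iic x)).toReal =
      ∫ y in Ioc 0 (x - v), gammaPDFReal a r y := by
  have h := map_const_add_mul_apply_Iic (gammaMeasure a r) one_pos v x
  simp only [one_mul, div_one] at h
  rw [h, gammaMeasure]
  exact toReal_withDensity_ofReal_Iic (measurable_gammaPDFReal a r) (gammaPDFReal_nonneg ha hr)
    (fun _ hy => if_neg hy.not_ge) _

theorem tendsto_toReal_map_betaMeasure_Iic {a r : ℝ} (ha : 0 < a) (hr : 0 < r) (v x : ℝ) :
    Tendsto (fun β => (((_root_.betaMeasure a β).map (fun z => v + β / r * z)) (Iic x)).toReal)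
      atTop (𝓝 ((((gammaMeasure a r).map (fun y => v + y)) (Iic x)).toReal)) := by
  rw [toReal_map_gammaMeasure_Iic ha hr]
  refine (tendsto_setIntegral_div_mul_betaPDFReal_div_mul ha hr _).congr' ?_
  filter_upwards [eventually_gt_atTop 0] with β hβ
  rw [toReal_map_betaMeasure_Iic ha hr hβ]

lemma map_const_add_withDensity (c : ℝ) {f : ℝ → ENNReal} (hf : Measurable f) :
    (volume.withDensity f).map (fun y => c + y) = volume.withDensity fun v => f (v - c) := by
  ext s hs
  rw [Measure.map_apply (measurable_const_add c) hs, withDensity_apply _ hs,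
    withDensity_apply _ (measurable_const_add c hs),
    ← (measurePreserving_add_left volume c).setLIntegral_comp_preimage hs (by fun_prop)]
  simp only [add_sub_cancel_left]

theorem shifted_voronoi_tendsto_translated_gamma_general
    (b ρ v_c : ℝ) (hb : 0 < b) (hρ : 0 < ρ) :
    (∀ x : ℝ,
      Tendsto
        (fun n : ℕ =>
          (((_root_.betaMeasure (2 * b) (((n : ℝ) - 2) * b)).map
              (fun z => v_c + ((((n : ℝ) - 2) * b) / (2 * ρ)) * z)) (Set.Iic x)).toReal)
        atTop
        (nhds ((((gammaMeasure (2 * b) (2 * ρ)).map (fun y => v_c + y))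
          (Set.Iic x)).toReal))) ∧
    ((gammaMeasure (2 * b) (2 * ρ)).map (fun y => v_c + y)
      = volume.withDensity (fun v => ENNReal.ofReal (gammaPDFReal (2 * b) (2 * ρ) (v - v_c)))) ∧
    (∀ v : ℝ, v_c ≤ v →
      gammaPDFReal (2 * b) (2 * ρ) (v - v_c)
        = (2 * ρ) ^ (2 * b) * (v - v_c) ^ (2 * b - 1)
            * Real.exp (-(2 * ρ * (v - v_c))) / Real.Gamma (2 * b)) ∧
    (2 * ρ = (2 * b) / ((v_c + (2 * b) / (2 * ρ)) - v_c)) := by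
  have ha : 0 < 2 * b := by positivity
  have hr : 0 < 2 * ρ := by positivity
  have hβ : Tendsto (fun n : ℕ => ((n : ℝ) - 2) * b) atTop atTop :=
    (tendsto_atTop_add_const_right _ (-2) tendsto_natCast_atTop_atTop).atTop_mul_const hb
  refine ⟨fun x => (tendsto_toReal_map_betaMeasure_Iic ha hr v_c x).comp hβ,
    map_const_add_withDensity v_c (measurable_gammaPDFReal _ _).ennreal_ofReal, fun v hv => ?_, ?_⟩
  · rw [gammaPDFReal, if_pos (sub_nonneg.2 hv)]
    ring
  · rw [add_sub_cancel_left]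
    field_simp

/-- Fix `b > 0`, `ρ > 0` and `v_c ≥ 0`.  For each integer `n ≥ 3` let
`Z_n` be a beta random variable with parameters `2b` and `(n - 2) b`.  Then the shifted
rescaled Voronoi lengths `V_n = v_c + ((n - 2) b / (2ρ)) Z_n` converge in distribution, as
`n → ∞`, to `v_c + Y` where `Y` is a gamma random variable with shape parameter `2b` and
rate `2ρ`; the limiting density is the translated gamma density
`p(v) = (2ρ)^{2b} (v - v_c)^{2b-1} e^{-2ρ(v - v_c)} / Γ(2b)` for `v ≥ v_c`, which equals
the `k`-gamma distribution with `k = 2b` upon substituting `2ρ = k / (v̄ - v_c)` where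
`v̄ = v_c + 2b/(2ρ)` is the mean of the limit. -/
theorem shifted_voronoi_tendsto_translated_gamma
    (b ρ v_c : ℝ) (hb : 0 < b) (hρ : 0 < ρ) (hvc : 0 ≤ v_c) :
    (∀ x : ℝ,
      Tendsto
        (fun n : ℕ =>
          (((_root_.betaMeasure (2 * b) (((n : ℝ) - 2) * b)).map
              (fun z => v_c + ((((n : ℝ) - 2) * b) / (2 * ρ)) * z)) (Set.Iic x)).toReal)
        atTop
        (nhds ((((gammaMeasure (2 * b) (2 * ρ)).map (fun y => v_c + y))
          (Set.Iic x)).toReal))) ∧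
    ((gammaMeasure (2 * b) (2 * ρ)).map (fun y => v_c + y)
      = volume.withDensity (fun v => ENNReal.ofReal (gammaPDFReal (2 * b) (2 * ρ) (v - v_c)))) ∧
    (∀ v : ℝ, v_c ≤ v →
      gammaPDFReal (2 * b) (2 * ρ) (v - v_c)
        = (2 * ρ) ^ (2 * b) * (v - v_c) ^ (2 * b - 1)
            * Real.exp (-(2 * ρ * (v - v_c))) / Real.Gamma (2 * b)) ∧
    (2 * ρ = (2 * b) / ((v_c + (2 * b) / (2 * ρ)) - v_c)) :=
  shifted_voronoi_tendsto_translated_gamma_general b ρ v_c hb hρ
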